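/- arXiv:1209.2887 — 4 statements merged into one kernel-verified Lean document; each statement's English description precedes it below -/
import Mathlib

section
/- The injection distance d_I is a metric on the set of all subspaces of F_q^n: for all subspaces U, V, W of F_q^n one has (i) d_I(U,V) = 0 if and only if U = V, (ii) d_I(U,V) = d_I(V,U), and (iii) d_I(U,W) ≤ d_I(U,V) + d_I(V,W). -/
/-!
Symmetry is clear, and `d_I(U,V) = 0` forces `dim (U ∩ V) = dim U = dim V`, hence
`U = U ∩ V = V`. For the triangle inequality, `U ∩ V` and `V ∩ W` both lie in `V` and meet
inside `U ∩ W`, so the dimension formula for `(U ∩ V) + (V ∩ W)` gives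
`dim (U ∩ V) + dim (V ∩ W) ≤ dim V + dim (U ∩ W)`; the rest is arithmetic of maxima.
-/

open Module

namespace Submodule

variable {K V : Type*} [DivisionRing K] [AddCommGroup V] [Module K V]

variable (K) in
noncomputable def injectionDist (U W : Submodule K V) : ℕ :=
  max (finrank K U) (finrank K W) - finrank K ↥(U ⊓ W)

theorem injectionDist_comm (U W : Submodule K V) : injectionDist K U W = injectionDist K W U := by
  rw [injectionDist, injectionDist, max_comm, inf_comm]

variable [FiniteDimensional K V]

theorem finrank_inf_add_finrank_inf_le (U W X : Submodule K V) :
    finrank K ↥(U ⊓ W) + finrank K ↥(W ⊓ X) ≤ finrank K W + finrank K ↥(U ⊓ X) := by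
  have hsup : finrank K ↥(U ⊓ W ⊔ W ⊓ X) ≤ finrank K W :=
    finrank_mono (sup_le inf_le_right inf_le_left)
  have hinf : finrank K ↥(U ⊓ W ⊓ (W ⊓ X)) ≤ finrank K ↥(U ⊓ X) :=
    finrank_mono (le_inf (inf_le_left.trans inf_le_left) (inf_le_right.trans inf_le_right))
  have := finrank_sup_add_finrank_inf_eq (U ⊓ W) (W ⊓ X)
  omega

theorem injectionDist_eq_zero_iff {U W : Submodule K V} : injectionDist K U W = 0 ↔ U = W := by
  refine ⟨fun h ↦ ?_, fun h ↦ by rw [h, injectionDist, max_self, inf_idem, Nat.sub_self]⟩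
  rw [injectionDist, Nat.sub_eq_zero_iff_le, max_le_iff] at h
  have hU : U ⊓ W = U := eq_of_le_of_finrank_le inf_le_left h.1
  have hW : U ⊓ W = W := eq_of_le_of_finrank_le inf_le_right h.2
  rw [← hU, hW]

theorem injectionDist_triangle (U W X : Submodule K V) :
    injectionDist K U X ≤ injectionDist K U W + injectionDist K W X := by
  have hUW : finrank K ↥(U ⊓ W) ≤ finrank K W := finrank_mono inf_le_right
  have hWX : finrank K ↥(W ⊓ X) ≤ finrank K W := finrank_mono inf_le_left
  have := finrank_inf_add_finrank_inf_le U W X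
  simp only [injectionDist]
  omega

end Submodule

open Submodule in
theorem injection_distance_is_metric_general {F : Type*} [Field F] (n : ℕ)
    (dI : Submodule F (Fin n → F) → Submodule F (Fin n → F) → ℕ)
    (hdI : ∀ U V : Submodule F (Fin n → F),
      dI U V = max (Module.finrank F ↥U) (Module.finrank F ↥V) - Module.finrank F ↥(U ⊓ V)) :
    (∀ U V : Submodule F (Fin n → F), dI U V = 0 ↔ U = V) ∧
    (∀ U V : Submodule F (Fin n → F), dI U V = dI V U) ∧
    (∀ U V W : Submodule F (Fin n → F), dI U W ≤ dI U V + dI V W) := by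
  obtain rfl : dI = injectionDist F := funext₂ hdI
  exact ⟨fun _ _ ↦ injectionDist_eq_zero_iff, injectionDist_comm, injectionDist_triangle⟩

/-- The injection distance `d_I(U,V) = max{dim U, dim V} - dim(U ∩ V)` is a metric on the
set of all subspaces of `F_q^n`. -/
theorem injection_distance_is_metric {F : Type*} [Field F] [Fintype F] (n : ℕ)
    (dI : Submodule F (Fin n → F) → Submodule F (Fin n → F) → ℕ)
    (hdI : ∀ U V : Submodule F (Fin n → F),
      dI U V = max (Module.finrank F ↥U) (Module.finrank F ↥V) - Module.finrank F ↥(U ⊓ V)) :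
    (∀ U V : Submodule F (Fin n → F), dI U V = 0 ↔ U = V) ∧
    (∀ U V : Submodule F (Fin n → F), dI U V = dI V U) ∧
    (∀ U V W : Submodule F (Fin n → F), dI U W ≤ dI U V + dI V W) :=
  injection_distance_is_metric_general n dI hdI
end

section
/- Let U_0 be the span of the first k standard basis vectors e_1, …, e_k of F_q^n, let t ≤ k, and let M be a k×n matrix over F_q of rank k with row space V. Then d_I(U_0, V) ≤ t (equivalently dim(U_0 ∩ V) ≥ k − t) if and only if every Plücker coordinate μ_{i_1,…,i_k}(M) vanishes for all index sets 1 ≤ i_1 < … < i_k ≤ n in which fewer than k − t of the indices i_j satisfy i_j ≤ k; that is, B_t^k(U_0) is cut out inside Grass_q(k,n) by the vanishing of precisely these Plücker coordinates. -/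
/-!
Restricting the row space `V` of `M` to the last `n - k` coordinates has kernel `U₀ ⊓ V` and
image the row space of the block `B` formed by the last `n - k` columns of `M`, so
`dim (U₀ ⊓ V) = k - rank B` and the ball condition says `rank B ≤ t`. A nonzero `k × k` minor
has independent columns, so at most `rank B` of them come from `B`. Conversely, a maximal
independent family of columns of `B` extends, because `M` has rank `k`, to `k` independent
columns of `M`: their minor is nonzero and at least `rank B` of them come from `B`.
-/

open Submodule Module Matrix
open scoped Finset

section

variable {F : Type*} [Field F]

theorem finrank_map_add_finrank_inf_ker {V W : Type*} [AddCommGroup V] [Module F V]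
    [AddCommGroup W] [Module F W] (f : V →ₗ[F] W) (p : Submodule F V) [FiniteDimensional F p] :
    finrank F (p.map f) + finrank F ↥(p ⊓ LinearMap.ker f) = finrank F p := by
  have h := (f.domRestrict p).finrank_range_add_finrank_ker
  rwa [LinearMap.range_domRestrict, LinearMap.ker_domRestrict,
    ← Submodule.finrank_map_subtype_eq, Submodule.map_comap_subtype] at h

theorem span_single_one_eq_ker_funLeft {ι : Type*} [Fintype ι] [DecidableEq ι] (s : Set ι) :
    span F ((fun i => Pi.single i (1 : F)) '' s) =
      LinearMap.ker (LinearMap.funLeft F F ((↑) : ↥sᶜ → ι)) := by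
  apply le_antisymm
  · rw [span_le]
    rintro _ ⟨i, hi, rfl⟩
    ext ⟨j, hj⟩
    have hji : j ≠ i := fun h => hj (h ▸ hi)
    simp [LinearMap.funLeft_apply, hji]
  · intro x hx
    rw [pi_eq_sum_univ x]
    refine sum_mem fun i _ => ?_
    by_cases hi : i ∈ s
    · refine smul_mem _ _ (subset_span ⟨i, hi, ?_⟩)
      ext j
      simp [Pi.single_apply, eq_comm]
    · have hxi : x i = 0 := congrFun (LinearMap.mem_ker.mp hx) ⟨i, hi⟩
      simp [hxi]

theorem map_funLeft_span_rows {m ι κ : Type*} (M : Matrix m ι F) (f : κ → ι) :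
    (span F (Set.range M.row)).map (LinearMap.funLeft F F f) =
      span F (Set.range (M.submatrix id f).row) := by
  rw [map_span, ← Set.range_comp]
  rfl

theorem finrank_span_single_inf_span_rows_add_rank_submatrix {m ι : Type*} [Finite m]
    [Fintype ι] [DecidableEq ι] (M : Matrix m ι F) (s : Set ι) [DecidablePred (· ∈ s)] :
    finrank F ↥(span F ((fun i => Pi.single i (1 : F)) '' s) ⊓ span F (Set.range M.row)) +
      (M.submatrix id ((↑) : ↥sᶜ → ι)).rank = M.rank := by
  rw [rank_eq_finrank_span_row, rank_eq_finrank_span_row, ← finrank_map_add_finrank_inf_ker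
    (LinearMap.funLeft F F ((↑) : ↥sᶜ → ι)) (span F (Set.range M.row)), map_funLeft_span_rows,
    span_single_one_eq_ker_funLeft, inf_comm, add_comm]

theorem LinearIndepOn.finrank_span_image_finset {ι V : Type*} [AddCommGroup V] [Module F V]
    {v : ι → V} {b : Finset ι} (h : LinearIndepOn F v b) :
    finrank F (span F (v '' b)) = #b := by
  rw [Set.image_eq_range, finrank_span_eq_card h]
  simp

theorem card_filter_le_rank_submatrix_of_det_ne_zero {m ι : Type*} [Fintype m] [DecidableEq m]
    [Fintype ι] (M : Matrix m ι F) (f : m → ι) (hdet : (M.submatrix id f).det ≠ 0)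
    (s : Set ι) [DecidablePred (· ∈ s)] :
    #{j | f j ∈ s} ≤ (M.submatrix id ((↑) : s → ι)).rank := by
  have hli := (linearIndependent_cols_of_det_ne_zero hdet).linearIndepOn
    (({j | f j ∈ s} : Finset m) : Set m)
  rw [rank_eq_finrank_span_cols, ← hli.finrank_span_image_finset]
  refine finrank_mono (span_mono ?_)
  rintro _ ⟨j, hj, rfl⟩
  exact ⟨⟨f j, (Finset.mem_filter.mp hj).2⟩, rfl⟩

theorem det_submatrix_orderEmbOfFin_ne_zero {k : ℕ} {ι : Type*} [LinearOrder ι]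
    (M : Matrix (Fin k) ι F) (b : Finset ι) (hb : #b = k) (hli : LinearIndepOn F M.col b) :
    (M.submatrix id (b.orderEmbOfFin hb)).det ≠ 0 := by
  rw [← isUnit_iff_ne_zero, ← isUnit_iff_isUnit_det, ← linearIndependent_cols_iff_isUnit]
  refine (linearIndepOn_range_iff (b.orderEmbOfFin hb).injective M.col).mp ?_
  rwa [Finset.range_orderEmbOfFin]

theorem card_filter_orderEmbOfFin {k : ℕ} {ι : Type*} [LinearOrder ι] (b : Finset ι)
    (hb : #b = k) (p : ι → Prop) [DecidablePred p] :
    #{j | p (b.orderEmbOfFin hb j)} = #(b.filter p) := by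
  conv_rhs => rw [← b.map_orderEmbOfFin_univ hb, Finset.filter_map, Finset.card_map]
  rfl

theorem exists_linearIndepOn_cols_card_eq_rank {m ι : Type*} [Finite m] [Fintype ι]
    (M : Matrix m ι F) (s : Set ι) [DecidablePred (· ∈ s)] :
    ∃ b : Finset ι, LinearIndepOn F M.col b ∧ #b = M.rank ∧
      (M.submatrix id ((↑) : s → ι)).rank ≤ #(b.filter (· ∈ s)) := by
  classical
  obtain ⟨b₁, hb₁s, -, hsb₁, hli₁⟩ :=
    exists_linearIndepOn_extension (linearIndepOn_empty F M.col) (Set.empty_subset s)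
  obtain ⟨b, -, hb₁b, hb, hli⟩ := exists_linearIndepOn_extension hli₁ (Set.subset_univ b₁)
  have hli' : LinearIndepOn F M.col (b.toFinset : Set ι) := by simpa using hli
  have hli₁' : LinearIndepOn F M.col (b₁.toFinset : Set ι) := by simpa using hli₁
  refine ⟨b.toFinset, hli', ?_, ?_⟩
  · have hspan : span F (Set.range M.col) = span F (M.col '' b) :=
      le_antisymm (span_le.mpr (by simpa using hb)) (span_mono (Set.image_subset_range _ _))
    rw [rank_eq_finrank_span_cols, hspan, ← hli'.finrank_span_image_finset, Set.coe_toFinset]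
  · calc (M.submatrix id ((↑) : s → ι)).rank = finrank F (span F (M.col '' s)) := by
          rw [rank_eq_finrank_span_cols, Set.image_eq_range]
          rfl
      _ ≤ finrank F (span F (M.col '' b₁)) := finrank_mono (span_le.mpr hsb₁)
      _ = #b₁.toFinset := by rw [← hli₁'.finrank_span_image_finset, Set.coe_toFinset]
      _ ≤ #(b.toFinset.filter (· ∈ s)) := by
          refine Finset.card_le_card fun i hi => ?_
          rw [Set.mem_toFinset] at hi
          exact Finset.mem_filter.mpr ⟨Set.mem_toFinset.mpr (hb₁b hi), hb₁s hi⟩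

theorem rank_submatrix_le_iff_forall_det_eq_zero {k : ℕ} {ι : Type*} [Fintype ι] [LinearOrder ι]
    (M : Matrix (Fin k) ι F) (hM : M.rank = k) (s : Set ι) [DecidablePred (· ∈ s)] (t : ℕ) :
    (M.submatrix id ((↑) : s → ι)).rank ≤ t ↔
      ∀ ι' : Fin k → ι, StrictMono ι' → t < #{j | ι' j ∈ s} → (M.submatrix id ι').det = 0 := by
  constructor
  · intro hrank ι' _ hcard
    by_contra hdet
    exact lt_irrefl t
      (hcard.trans_le ((card_filter_le_rank_submatrix_of_det_ne_zero M ι' hdet s).trans hrank))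
  · intro hminors
    obtain ⟨b, hli, hb, hrank⟩ := exists_linearIndepOn_cols_card_eq_rank M s
    rw [hM] at hb
    by_contra! ht
    refine det_submatrix_orderEmbOfFin_ne_zero M b hb hli
      (hminors _ (b.orderEmbOfFin hb).strictMono ?_)
    rw [card_filter_orderEmbOfFin b hb (· ∈ s)]
    omega

end

theorem ball_around_standard_subspace_in_pluecker_coordinates_general
    {F : Type*} [Field F] (n k t : ℕ) (hkn : k ≤ n)
    (U₀ : Submodule F (Fin n → F))
    (hU₀ : U₀ = Submodule.span F
      (Set.range fun i : Fin k => Pi.single (Fin.castLE hkn i) (1 : F)))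
    (M : Matrix (Fin k) (Fin n) F) (hM : M.rank = k)
    (V : Submodule F (Fin n → F)) (hV : V = Submodule.span F (Set.range M)) :
    max (Module.finrank F ↥U₀) (Module.finrank F ↥V) - Module.finrank F ↥(U₀ ⊓ V) ≤ t ↔
    ∀ ι : Fin k → Fin n, StrictMono ι →
      (Finset.univ.filter fun j : Fin k => (ι j : ℕ) < k).card < k - t →
      (M.submatrix id ι).det = 0 := by
  have hU₀' : U₀ = span F ((fun i => Pi.single i (1 : F)) '' {i : Fin n | (i : ℕ) < k}) := by
    rw [hU₀, ← Fin.range_castLE hkn, ← Set.range_comp]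
    rfl
  have hU₀k : finrank F U₀ ≤ k := hU₀ ▸ (finrank_range_le_card _).trans_eq (Fintype.card_fin k)
  have hVk : finrank F V = k := by rw [hV]; exact (rank_eq_finrank_span_row M).symm.trans hM
  have hcodim : k - finrank F ↥(U₀ ⊓ V) =
      (M.submatrix id ((↑) : ↥{i : Fin n | (i : ℕ) < k}ᶜ → Fin n)).rank := by
    have h := finrank_span_single_inf_span_rows_add_rank_submatrix M {i : Fin n | (i : ℕ) < k}
    rw [hM, ← hU₀', ← show V = span F (Set.range M.row) from hV] at h
    omega
  rw [max_eq_right (hU₀k.trans hVk.ge), hVk, hcodim,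
    rank_submatrix_le_iff_forall_det_eq_zero M hM _ t]
  refine forall_congr' fun ι => imp_congr_right fun _ => imp_congr_left ?_
  have hsplit := Finset.card_filter_add_card_filter_not (s := Finset.univ)
    (p := fun j : Fin k => (ι j : ℕ) < k)
  simp only [Set.mem_compl_iff, Set.mem_ofPred_eq, Finset.card_univ, Fintype.card_fin] at hsplit ⊢
  omega

/-- The ball `B_t^k(U_0)` around the row space `U_0` of `[I_k | 0]` in the Grassmannian
`Grass_q(k,n)` is cut out by the vanishing of the Plücker coordinates
`μ_{i_1,…,i_k}` for all strictly increasing index sets in which fewer than `k - t` of the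
indices lie among the first `k` positions. -/
theorem ball_around_standard_subspace_in_pluecker_coordinates
    {F : Type*} [Field F] [Fintype F] (n k t : ℕ) (ht : t ≤ k) (hkn : k ≤ n)
    (U₀ : Submodule F (Fin n → F))
    (hU₀ : U₀ = Submodule.span F
      (Set.range fun i : Fin k => Pi.single (Fin.castLE hkn i) (1 : F)))
    (M : Matrix (Fin k) (Fin n) F) (hM : M.rank = k)
    (V : Submodule F (Fin n → F)) (hV : V = Submodule.span F (Set.range M)) :
    max (Module.finrank F ↥U₀) (Module.finrank F ↥V) - Module.finrank F ↥(U₀ ⊓ V) ≤ t ↔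
    ∀ ι : Fin k → Fin n, StrictMono ι →
      (Finset.univ.filter fun j : Fin k => (ι j : ℕ) < k).card < k - t →
      (M.submatrix id ι).det = 0 :=
  ball_around_standard_subspace_in_pluecker_coordinates_general n k t hkn U₀ hU₀ M hM V hV
end

section
/- Over the binary field F_2, let U_1, U_2, U_3, U_4 be the 2-dimensional subspaces of F_2^4 given as the row spaces of the matrices [[1,0,0,0],[0,1,0,0]], [[0,0,1,0],[0,0,0,1]], [[1,1,0,1],[0,1,1,1]], and [[1,1,1,0],[1,0,1,1]] respectively. Then there exists no 2-dimensional subspace V of F_2^4 with V ∩ U_i ≠ {0} for all i = 1, 2, 3, 4. -/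
/-!
A plane of `F_2^4` has only three nonzero vectors. The four given planes meet pairwise only in
`0`, so a plane meeting each of them nontrivially would contain four distinct nonzero vectors.
-/

open Function

namespace Submodule

variable {R M ι : Type*} [Ring R] [AddCommGroup M] [Module R M]

theorem disjoint_span_pair_iff {a b c d : M} :
    Disjoint (span R {a, b}) (span R {c, d}) ↔
      ∀ p q r s : R, p • a + q • b = r • c + s • d → p • a + q • b = 0 := by
  simp only [disjoint_def, mem_span_pair]
  constructor
  · exact fun h p q r s hpqrs ↦ h _ ⟨p, q, rfl⟩ ⟨r, s, hpqrs.symm⟩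
  · rintro h _ ⟨p, q, rfl⟩ ⟨r, s, hrs⟩
    exact h p q r s hrs.symm

theorem natCard_lt_of_pairwise_disjoint_of_inf_ne_bot [Finite ι] {V : Submodule R M} [Finite V]
    {U : ι → Submodule R M} (hU : Pairwise (Disjoint on U)) (hV : ∀ i, V ⊓ U i ≠ ⊥) :
    Nat.card ι < Nat.card V := by
  choose v hv hv0 using fun i ↦ (V ⊓ U i).ne_bot_iff.mp (hV i)
  let f : Option ι → V := fun o ↦ o.elim 0 fun i ↦ ⟨v i, (hv i).1⟩
  have hf : Injective f := by
    rintro (_ | i) (_ | j) hij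
    · rfl
    · exact absurd (congrArg Subtype.val hij).symm (hv0 j)
    · exact absurd (congrArg Subtype.val hij) (hv0 i)
    · congr 1
      by_contra hne
      have hvij : v i = v j := congrArg Subtype.val hij
      exact hv0 i (disjoint_def.mp (hU hne) _ (hv i).2 (hvij ▸ (hv j).2))
  simpa [Finite.card_option] using Nat.card_le_card_of_injective f hf

end Submodule

/-- Over `F_2`, there is no 2-dimensional subspace (line in `ℙ^3`) of `F_2^4` intersecting
all four of the given 2-dimensional subspaces nontrivially. -/
theorem no_common_transversal_over_F2 :
    ¬ ∃ V : Submodule (ZMod 2) (Fin 4 → ZMod 2),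
      Module.finrank (ZMod 2) ↥V = 2 ∧
      V ⊓ Submodule.span (ZMod 2)
        ({![1,0,0,0], ![0,1,0,0]} : Set (Fin 4 → ZMod 2)) ≠ ⊥ ∧
      V ⊓ Submodule.span (ZMod 2)
        ({![0,0,1,0], ![0,0,0,1]} : Set (Fin 4 → ZMod 2)) ≠ ⊥ ∧
      V ⊓ Submodule.span (ZMod 2)
        ({![1,1,0,1], ![0,1,1,1]} : Set (Fin 4 → ZMod 2)) ≠ ⊥ ∧
      V ⊓ Submodule.span (ZMod 2)
        ({![1,1,1,0], ![1,0,1,1]} : Set (Fin 4 → ZMod 2)) ≠ ⊥ := by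
  rintro ⟨V, hrank, h₁, h₂, h₃, h₄⟩
  let U : Fin 4 → Submodule (ZMod 2) (Fin 4 → ZMod 2) := ![
    Submodule.span (ZMod 2) {![1,0,0,0], ![0,1,0,0]},
    Submodule.span (ZMod 2) {![0,0,1,0], ![0,0,0,1]},
    Submodule.span (ZMod 2) {![1,1,0,1], ![0,1,1,1]},
    Submodule.span (ZMod 2) {![1,1,1,0], ![1,0,1,1]}]
  have hU : Pairwise (Disjoint on U) := by
    intro i j hij
    fin_cases i <;> fin_cases j <;>
      first | exact absurd rfl hij | exact Submodule.disjoint_span_pair_iff.mpr (by decide)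
  have hcard : Nat.card V = 4 := by
    rw [Module.natCard_eq_pow_finrank (K := ZMod 2), hrank, Nat.card_zmod]; rfl
  have hlt := Submodule.natCard_lt_of_pairwise_disjoint_of_inf_ne_bot (V := V) hU
    (by intro i; fin_cases i <;> assumption)
  simp [hcard] at hlt
end

section
/- Let F be an algebraically closed field containing F_2, and let U_1, U_2, U_3, U_4 be the 2-dimensional subspaces of F^4 spanned by the rows of the matrices [[1,0,0,0],[0,1,0,0]], [[0,0,1,0],[0,0,0,1]], [[1,1,0,1],[0,1,1,1]], and [[1,1,1,0],[1,0,1,1]] respectively. Then there exist exactly two 2-dimensional subspaces V of F^4 with V ∩ U_i ≠ {0} for all i = 1, 2, 3, 4. -/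
/-!
Every common transversal `V` meets `U₁ = {x₂ = x₃ = 0}` and `U₂ = {x₀ = x₁ = 0}`, which are
complementary, so `V` is spanned by a point `(a, b, 0, 0)` of `U₁` and a point `(0, 0, c, d)`
of `U₂`. Meeting `U₃` resp. `U₄` then means that a homogeneous `2 × 2` system in the
coefficients of `V` has a nontrivial solution, i.e. that its determinant vanishes. The two
determinant equations force `a, d ≠ 0`, `b / a = c / d =: t` and `t² - t + 1 = 0`, so the
transversals are parametrised by the roots of `t² - t + 1`. Over an algebraically closed field
this polynomial has a root `ω`, the other root is `1 - ω`, and in characteristic `2` these differ.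
-/

open Submodule Module

section

variable {K V : Type*} [Field K] [AddCommGroup V] [Module K V] {u w : V}

theorem finrank_span_pair (huw : LinearIndependent K ![u, w]) :
    finrank K (span K {u, w}) = 2 := by
  have := finrank_span_eq_card huw
  rwa [Matrix.range_cons_cons_empty, Fintype.card_fin] at this

theorem linearIndependent_pair_of_disjoint {p q : Submodule K V} (hpq : Disjoint p q)
    (hu : u ∈ p) (hw : w ∈ q) (hu0 : u ≠ 0) (hw0 : w ≠ 0) : LinearIndependent K ![u, w] :=
  (LinearIndependent.pair_iff' hu0).2 fun a hau =>
    hw0 (disjoint_def.1 hpq w (hau ▸ p.smul_mem a hu) hw)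

theorem eq_span_pair_of_finrank_eq_two {W : Submodule K V} (hW : finrank K W = 2)
    (hu : u ∈ W) (hw : w ∈ W) (huw : LinearIndependent K ![u, w]) :
    W = span K {u, w} := by
  have : Module.Finite K W := Module.finite_of_finrank_pos (by omega)
  refine (eq_of_le_of_finrank_eq (span_le.2 ?_) ?_).symm
  · rintro x (rfl | rfl) <;> assumption
  · rw [hW, finrank_span_pair huw]

theorem exists_eq_span_pair_of_inf_ne_bot {W p q : Submodule K V} (hW : finrank K W = 2)
    (hpq : Disjoint p q) (hp : W ⊓ p ≠ ⊥) (hq : W ⊓ q ≠ ⊥) :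
    ∃ u ∈ p, ∃ w ∈ q, u ≠ 0 ∧ w ≠ 0 ∧ W = span K {u, w} := by
  obtain ⟨u, hu, hu0⟩ := (Submodule.ne_bot_iff _).1 hp
  obtain ⟨w, hw, hw0⟩ := (Submodule.ne_bot_iff _).1 hq
  rw [mem_inf] at hu hw
  exact ⟨u, hu.2, w, hw.2, hu0, hw0, eq_span_pair_of_finrank_eq_two hW hu.1 hw.1
    (linearIndependent_pair_of_disjoint hpq hu.2 hw.2 hu0 hw0)⟩

theorem span_pair_inf_ne_bot_iff (huw : LinearIndependent K ![u, w]) (U : Submodule K V) :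
    span K {u, w} ⊓ U ≠ ⊥ ↔ ∃ c : Fin 2 → K, c ≠ 0 ∧ c 0 • u + c 1 • w ∈ U := by
  rw [Submodule.ne_bot_iff]
  constructor
  · rintro ⟨x, hx, hx0⟩
    obtain ⟨hx, hxU⟩ := mem_inf.1 hx
    obtain ⟨α, β, rfl⟩ := mem_span_pair.1 hx
    refine ⟨![α, β], fun h => hx0 ?_, hxU⟩
    simp [show α = 0 from congrFun h 0, show β = 0 from congrFun h 1]
  · rintro ⟨c, hc, hcU⟩
    refine ⟨_, mem_inf.2 ⟨mem_span_pair.2 ⟨c 0, c 1, rfl⟩, hcU⟩, fun h => hc (funext ?_)⟩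
    exact Fintype.linearIndependent_iff.1 huw c (by simpa [Fin.sum_univ_two] using h)

end

namespace CommonTransversal

variable {F : Type*} [Field F] {a b c d : F}

def U₁ : Submodule F (Fin 4 → F) := span F {![1,0,0,0], ![0,1,0,0]}
def U₂ : Submodule F (Fin 4 → F) := span F {![0,0,1,0], ![0,0,0,1]}
def U₃ : Submodule F (Fin 4 → F) := span F {![1,1,0,1], ![0,1,1,1]}
def U₄ : Submodule F (Fin 4 → F) := span F {![1,1,1,0], ![1,0,1,1]}

def IsTransversal (V : Submodule F (Fin 4 → F)) : Prop :=
  finrank F V = 2 ∧ V ⊓ U₁ ≠ ⊥ ∧ V ⊓ U₂ ≠ ⊥ ∧ V ⊓ U₃ ≠ ⊥ ∧ V ⊓ U₄ ≠ ⊥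

theorem mem_U₁_iff {v : Fin 4 → F} : v ∈ U₁ ↔ ∃ a b, v = ![a, b, 0, 0] := by
  simp [U₁, mem_span_pair, eq_comm]

theorem mem_U₂_iff {v : Fin 4 → F} : v ∈ U₂ ↔ ∃ c d, v = ![0, 0, c, d] := by
  simp [U₂, mem_span_pair, eq_comm]

theorem mem_U₃_iff {v : Fin 4 → F} : v ∈ U₃ ↔ v 1 = v 0 + v 2 ∧ v 3 = v 0 + v 2 := by
  rw [U₃, mem_span_pair]
  constructor
  · rintro ⟨s, r, rfl⟩
    constructor <;> simp
  · rintro ⟨h1, h3⟩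
    exact ⟨v 0, v 2, by funext i; fin_cases i <;> simp_all⟩

theorem mem_U₄_iff {v : Fin 4 → F} : v ∈ U₄ ↔ v 0 = v 2 ∧ v 1 + v 3 = v 0 := by
  rw [U₄, mem_span_pair]
  constructor
  · rintro ⟨s, r, rfl⟩
    constructor <;> simp
  · rintro ⟨h0, h1⟩
    exact ⟨v 1, v 3, by funext i; fin_cases i <;> simp_all⟩

theorem disjoint_U₁_U₂ : Disjoint (U₁ : Submodule F (Fin 4 → F)) U₂ := by
  rw [disjoint_def]
  rintro v hv₁ hv₂
  obtain ⟨a, b, rfl⟩ := mem_U₁_iff.1 hv₁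
  obtain ⟨c, d, h⟩ := mem_U₂_iff.1 hv₂
  simp [show a = 0 from congrFun h 0, show b = 0 from congrFun h 1]

def join (a b c d : F) : Submodule F (Fin 4 → F) := span F {![a, b, 0, 0], ![0, 0, c, d]}

theorem linearIndependent_join (hu : ![a, b, 0, 0] ≠ 0) (hw : ![0, 0, c, d] ≠ 0) :
    LinearIndependent F ![![a, b, 0, 0], ![0, 0, c, d]] :=
  linearIndependent_pair_of_disjoint disjoint_U₁_U₂ (mem_U₁_iff.2 ⟨a, b, rfl⟩)
    (mem_U₂_iff.2 ⟨c, d, rfl⟩) hu hw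

theorem join_inf_U₁_ne_bot (hu : ![a, b, 0, 0] ≠ 0) : join a b c d ⊓ U₁ ≠ ⊥ :=
  (Submodule.ne_bot_iff _).2
    ⟨_, mem_inf.2 ⟨subset_span (by simp), mem_U₁_iff.2 ⟨a, b, rfl⟩⟩, hu⟩

theorem join_inf_U₂_ne_bot (hw : ![0, 0, c, d] ≠ 0) : join a b c d ⊓ U₂ ≠ ⊥ :=
  (Submodule.ne_bot_iff _).2
    ⟨_, mem_inf.2 ⟨subset_span (by simp), mem_U₂_iff.2 ⟨c, d, rfl⟩⟩, hw⟩

theorem join_inf_U₃_ne_bot_iff (h : LinearIndependent F ![![a, b, 0, 0], ![0, 0, c, d]]) :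
    join a b c d ⊓ U₃ ≠ ⊥ ↔ (b - a) * d = b * c := by
  have hdet : (b - a) * d = b * c ↔ (!![b - a, -c; -a, d - c]).det = 0 := by
    rw [Matrix.det_fin_two_of]
    constructor <;> intro h <;> linear_combination h
  rw [hdet, ← Matrix.exists_mulVec_eq_zero_iff, join, span_pair_inf_ne_bot_iff h]
  refine exists_congr fun v => and_congr_right fun _ => ?_
  rw [mem_U₃_iff, Matrix.mulVec_fin_two]
  simp only [Pi.add_apply, Pi.smul_apply, smul_eq_mul, Matrix.of_apply, Matrix.cons_val,
    Matrix.cons_eq_zero_iff, Matrix.zero_empty, and_true, mul_zero, add_zero, zero_add]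
  constructor <;> rintro ⟨h₁, h₂⟩ <;> exact ⟨by linear_combination h₁, by linear_combination h₂⟩

theorem join_inf_U₄_ne_bot_iff (h : LinearIndependent F ![![a, b, 0, 0], ![0, 0, c, d]]) :
    join a b c d ⊓ U₄ ≠ ⊥ ↔ a * d = (a - b) * c := by
  have hdet : a * d = (a - b) * c ↔ (!![a, -c; b - a, d]).det = 0 := by
    rw [Matrix.det_fin_two_of]
    constructor <;> intro h <;> linear_combination h
  rw [hdet, ← Matrix.exists_mulVec_eq_zero_iff, join, span_pair_inf_ne_bot_iff h]
  refine exists_congr fun v => and_congr_right fun _ => ?_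
  rw [mem_U₄_iff, Matrix.mulVec_fin_two]
  simp only [Pi.add_apply, Pi.smul_apply, smul_eq_mul, Matrix.of_apply, Matrix.cons_val,
    Matrix.cons_eq_zero_iff, Matrix.zero_empty, and_true, mul_zero, add_zero, zero_add]
  constructor <;> rintro ⟨h₁, h₂⟩ <;> exact ⟨by linear_combination h₁, by linear_combination h₂⟩

theorem ne_zero_of_join_inf_U₃_U₄ (hu : ![a, b, 0, 0] ≠ 0) (hw : ![0, 0, c, d] ≠ 0)
    (h₃ : (b - a) * d = b * c) (h₄ : a * d = (a - b) * c) : a ≠ 0 ∧ d ≠ 0 := by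
  constructor
  · rintro rfl
    have hb : b ≠ 0 := fun hb => hu (by simp [hb])
    have hc : c = 0 := (mul_eq_zero.1 (by linear_combination h₄)).resolve_left hb
    have hd : d = 0 := (mul_eq_zero.1 (by linear_combination h₃ + b * hc)).resolve_left hb
    exact hw (by simp [hc, hd])
  · rintro rfl
    have hc : c ≠ 0 := fun hc => hw (by simp [hc])
    have hb : b = 0 := (mul_eq_zero.1 (by linear_combination -h₃)).resolve_right hc
    have ha : a = 0 := (mul_eq_zero.1 (by linear_combination -h₄ + c * hb)).resolve_right hc
    exact hu (by simp [ha, hb])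

theorem div_eq_div_and_sq_sub_add_one_eq_zero (ha : a ≠ 0) (hd : d ≠ 0)
    (h₃ : (b - a) * d = b * c) (h₄ : a * d = (a - b) * c) :
    c / d = b / a ∧ (b / a) ^ 2 - b / a + 1 = 0 := by
  have hbd : b * d = a * c := by linear_combination h₃ + h₄
  constructor
  · rw [div_eq_div_iff hd ha]
    linear_combination -hbd
  · have : d * (b ^ 2 - a * b + a ^ 2) = 0 := by linear_combination (b - a) * hbd + a * h₄
    field_simp
    linear_combination (mul_eq_zero.1 this).resolve_left hd

theorem join_eq_join_one_div (ha : a ≠ 0) (hd : d ≠ 0) :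
    join a b c d = join 1 (b / a) (c / d) 1 := by
  have hu : ![a, b, 0, 0] = a • ![1, b / a, 0, 0] := by simp [mul_div_cancel₀ b ha]
  have hw : ![0, 0, c, d] = d • ![0, 0, c / d, 1] := by simp [mul_div_cancel₀ c hd]
  rw [join, join, span_insert, span_insert, hu, hw, span_singleton_smul_eq ha.isUnit,
    span_singleton_smul_eq hd.isUnit]

theorem join_one_self_injective : Function.Injective fun t : F => join 1 t t 1 := by
  intro s t (h : join 1 s s 1 = join 1 t t 1)
  have hmem : ![1, s, 0, 0] ∈ join 1 t t 1 := h ▸ subset_span (by simp)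
  obtain ⟨α, β, hαβ⟩ := mem_span_pair.1 hmem
  have hα : α = 1 := by simpa using congrFun hαβ 0
  simpa [hα] using (congrFun hαβ 1).symm

theorem isTransversal_iff {V : Submodule F (Fin 4 → F)} :
    IsTransversal V ↔ ∃ t : F, t ^ 2 - t + 1 = 0 ∧ V = join 1 t t 1 := by
  constructor
  · rintro ⟨hV, h₁, h₂, h₃, h₄⟩
    obtain ⟨u, hu, w, hw, hu0, hw0, rfl⟩ :=
      exists_eq_span_pair_of_inf_ne_bot hV disjoint_U₁_U₂ h₁ h₂
    obtain ⟨a, b, rfl⟩ := mem_U₁_iff.1 hu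
    obtain ⟨c, d, rfl⟩ := mem_U₂_iff.1 hw
    have hind := linearIndependent_join hu0 hw0
    rw [← join, join_inf_U₃_ne_bot_iff hind] at h₃
    rw [← join, join_inf_U₄_ne_bot_iff hind] at h₄
    obtain ⟨ha, hd⟩ := ne_zero_of_join_inf_U₃_U₄ hu0 hw0 h₃ h₄
    obtain ⟨hcb, ht⟩ := div_eq_div_and_sq_sub_add_one_eq_zero ha hd h₃ h₄
    exact ⟨b / a, ht, by rw [← join, join_eq_join_one_div ha hd, hcb]⟩
  · rintro ⟨t, ht, rfl⟩
    have hu : ![1, t, 0, 0] ≠ 0 := fun h => one_ne_zero (congrFun h 0)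
    have hw : ![0, 0, t, 1] ≠ 0 := fun h => one_ne_zero (congrFun h 3)
    have hind := linearIndependent_join hu hw
    exact ⟨finrank_span_pair hind, join_inf_U₁_ne_bot hu, join_inf_U₂_ne_bot hw,
      (join_inf_U₃_ne_bot_iff hind).2 (by linear_combination -ht),
      (join_inf_U₄_ne_bot_iff hind).2 (by linear_combination ht)⟩

theorem exists_sq_sub_self_add_one_eq_zero [IsAlgClosed F] : ∃ ω : F, ω ^ 2 - ω + 1 = 0 := by
  open Polynomial in
  obtain ⟨ω, hω⟩ := IsAlgClosed.exists_root (X ^ 2 - X + 1 : F[X])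
    (by rw [show (X ^ 2 - X + 1 : F[X]).degree = 2 by compute_degree!]; decide)
  exact ⟨ω, by simpa using hω⟩

end CommonTransversal

open CommonTransversal in
/-- Over an algebraically closed field of characteristic 2 (containing `F_2`), there are
exactly two 2-dimensional subspaces of `F^4` intersecting all four of the given
2-dimensional subspaces nontrivially, as predicted by Schubert calculus (`d(2,2) = 2`). -/
theorem exactly_two_common_transversals_over_algebraic_closure
    {F : Type*} [Field F] [IsAlgClosed F] [CharP F 2] :
    {V : Submodule F (Fin 4 → F) |
      Module.finrank F ↥V = 2 ∧
      V ⊓ Submodule.span F ({![1,0,0,0], ![0,1,0,0]} : Set (Fin 4 → F)) ≠ ⊥ ∧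
      V ⊓ Submodule.span F ({![0,0,1,0], ![0,0,0,1]} : Set (Fin 4 → F)) ≠ ⊥ ∧
      V ⊓ Submodule.span F ({![1,1,0,1], ![0,1,1,1]} : Set (Fin 4 → F)) ≠ ⊥ ∧
      V ⊓ Submodule.span F ({![1,1,1,0], ![1,0,1,1]} : Set (Fin 4 → F)) ≠ ⊥}.ncard = 2 := by
  change {V | IsTransversal V}.ncard = 2
  obtain ⟨ω, hω⟩ := exists_sq_sub_self_add_one_eq_zero (F := F)
  have hfactor (t : F) : t ^ 2 - t + 1 = (t - ω) * (t - (1 - ω)) := by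
    linear_combination hω
  have hset : {V | IsTransversal V} = {join 1 ω ω 1, join 1 (1 - ω) (1 - ω) 1} := by
    ext V
    simp only [Set.mem_ofPred_eq, isTransversal_iff, hfactor, mul_eq_zero, sub_eq_zero,
      or_and_right, exists_or, exists_eq_left, Set.mem_insert_iff, Set.mem_singleton_iff]
  have hω_ne : ω ≠ 1 - ω := fun h => by
    simpa [CharTwo.two_eq_zero] using (show (2 : F) * ω = 1 by linear_combination h)
  rw [hset, Set.ncard_pair (join_one_self_injective.ne hω_ne)]
end
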